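/- In the setting of the dgl (L₁, D) built from minimal Quillen models of 2-cones, for every S ∈ 𝕃(V) the derivations [D, σ_S] and ad_S − σ_{∂_V S} agree on 𝕃(W₀): for all T ∈ 𝕃(W₀), [D, σ_S](T) = [S, T] − σ_{∂_V S}(T). Equivalently, D(σ_S(T)) = [S, T] − σ_{∂_V S}(T) for T ∈ 𝕃(W₀). -/

import Mathlib

universe u

/-- A graded Lie algebra over `ℚ`: a `ℤ`-graded vector space with a bilinear bracket
satisfying graded antisymmetry and the graded Jacobi identity on homogeneous elements. -/
structure GLA (Lc : Type u) [AddCommGroup Lc] [Module ℚ Lc] where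
  grade : ℤ → Submodule ℚ Lc
  internal : DirectSum.IsInternal grade
  br : Lc →ₗ[ℚ] Lc →ₗ[ℚ] Lc
  br_mem : ∀ {i j : ℤ} {x y : Lc}, x ∈ grade i → y ∈ grade j → br x y ∈ grade (i + j)
  antisymm : ∀ {i j : ℤ} {x y : Lc}, x ∈ grade i → y ∈ grade j →
      br x y = -((-1 : ℚ) ^ (i * j) • br y x)
  jacobi : ∀ {i j : ℤ} {x y : Lc} (z : Lc), x ∈ grade i → y ∈ grade j →
      br x (br y z) = br (br x y) z + (-1 : ℚ) ^ (i * j) • br y (br x z)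

namespace GLA

variable {Lc : Type u} [AddCommGroup Lc] [Module ℚ Lc]

/-- The Lie subalgebra (as a submodule closed under the bracket) generated by
a graded family of subspaces. -/
def lieSub (G : GLA Lc) (p : ℤ → Submodule ℚ Lc) : Submodule ℚ Lc :=
  sInf {q | (∀ i, p i ≤ q) ∧ ∀ x ∈ q, ∀ y ∈ q, G.br x y ∈ q}

/-- The submodule of decomposable elements of `L`: the span of all brackets. -/
def dec (G : GLA Lc) : Submodule ℚ Lc :=
  Submodule.span ℚ {x : Lc | ∃ a b : Lc, x = G.br a b}

/-- A graded Lie algebra is reduced if it vanishes in degrees `≤ 0`. -/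
def Reduced (G : GLA Lc) : Prop := ∀ i : ℤ, i ≤ 0 → G.grade i = ⊥

end GLA

/-!
Both sides of each identity are derivations of the same degree (graded commutators of
derivations are derivations), so it suffices to compare them on generators.  For `w ∈ W₀`
the formula for `D s(v ⊗ w)` says precisely that `[D, σ_w] = -ad_w` on `V`, hence on `𝕃(V)`.
Evaluating at `S` and using `σ_S(w) = ± σ_w(S)` gives `[D, σ_S] = ad_S - σ_{∂S}` on `W₀`,
hence on `𝕃(W₀)`; finally `D` vanishes on `𝕃(W₀)`, so `[D, σ_S](T) = D(σ_S(T))`.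
-/

namespace GLA

variable {Lc : Type u} [AddCommGroup Lc] [Module ℚ Lc]

def gradedComm (k l : ℤ) (f g : Lc →ₗ[ℚ] Lc) : Lc →ₗ[ℚ] Lc :=
  f ∘ₗ g - (-1 : ℚ) ^ (k * l) • g ∘ₗ f

variable (G : GLA Lc)

def MapsGrade (k : ℤ) (f : Lc →ₗ[ℚ] Lc) : Prop :=
  ∀ (n : ℤ) {x : Lc}, x ∈ G.grade n → f x ∈ G.grade (n + k)

def IsDerivation (k : ℤ) (f : Lc →ₗ[ℚ] Lc) : Prop :=
  ∀ (n : ℤ) (x y : Lc), x ∈ G.grade n →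
    f (G.br x y) = G.br (f x) y + (-1 : ℚ) ^ (k * n) • G.br x (f y)

theorem mem_lieSub {p : ℤ → Submodule ℚ Lc} {i : ℤ} {x : Lc} (hx : x ∈ p i) :
    x ∈ G.lieSub p :=
  Submodule.mem_sInf.mpr fun _ hq => hq.1 i hx

theorem lieSub_mono {p q : ℤ → Submodule ℚ Lc} (h : ∀ i, p i ≤ q i) :
    G.lieSub p ≤ G.lieSub q :=
  le_sInf fun _ hr => sInf_le ⟨fun i => (h i).trans (hr.1 i), hr.2⟩

theorem br_mem_lieSub {p : ℤ → Submodule ℚ Lc} {x y : Lc} (hx : x ∈ G.lieSub p)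
    (hy : y ∈ G.lieSub p) : G.br x y ∈ G.lieSub p :=
  Submodule.mem_sInf.mpr fun q hq =>
    hq.2 x (Submodule.mem_sInf.mp hx q hq) y (Submodule.mem_sInf.mp hy q hq)

theorem lieSub_le_of_homogeneous {p : ℤ → Submodule ℚ Lc} {K : Submodule ℚ Lc}
    (hpG : ∀ i, p i ≤ G.grade i) (hpK : ∀ i, p i ≤ K)
    (hbr : ∀ {b c : ℤ} {x y : Lc}, x ∈ G.grade b → x ∈ K → y ∈ G.grade c → y ∈ K →
      G.br x y ∈ K) :
    G.lieSub p ≤ K := by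
  set H := Submodule.span ℚ {x | ∃ b, x ∈ G.grade b ∧ x ∈ K}
  have hHK : H ≤ K := Submodule.span_le.mpr fun x ⟨_, _, hx⟩ => hx
  have hH : ∀ x ∈ H, ∀ y ∈ H, G.br x y ∈ H := fun x hx y hy => by
    have hxy := Submodule.apply_mem_map₂ G.br hx hy
    rw [Submodule.map₂_span_span] at hxy
    refine Submodule.span_le.mpr ?_ hxy
    rintro _ ⟨x, ⟨b, hxb, hxK⟩, y, ⟨c, hyc, hyK⟩, rfl⟩
    exact Submodule.subset_span ⟨b + c, G.br_mem hxb hyc, hbr hxb hxK hyc hyK⟩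
  refine le_trans (sInf_le ⟨fun i x hx => ?_, hH⟩) hHK
  exact Submodule.subset_span ⟨i, hpG i hx, hpK i hx⟩

theorem isDerivation_br {j : ℤ} {x : Lc} (hx : x ∈ G.grade j) : G.IsDerivation j (G.br x) :=
  fun _ _ z hy => G.jacobi z hx hy

theorem isDerivation_zero (k : ℤ) : G.IsDerivation k 0 := fun _ _ _ _ => by simp

variable {G}

theorem IsDerivation.neg {k : ℤ} {f : Lc →ₗ[ℚ] Lc} (hf : G.IsDerivation k f) :
    G.IsDerivation k (-f) := fun n x y hx => by simp [hf n x y hx, add_comm]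

theorem IsDerivation.sub {k : ℤ} {f g : Lc →ₗ[ℚ] Lc} (hf : G.IsDerivation k f)
    (hg : G.IsDerivation k g) : G.IsDerivation k (f - g) := fun n x y hx => by
  simp only [LinearMap.sub_apply, hf n x y hx, hg n x y hx, map_sub, smul_sub]
  abel

theorem IsDerivation.gradedComm {k l : ℤ} {f g : Lc →ₗ[ℚ] Lc} (hf : G.IsDerivation k f)
    (hg : G.IsDerivation l g) (hf' : G.MapsGrade k f) (hg' : G.MapsGrade l g) :
    G.IsDerivation (k + l) (gradedComm k l f g) := fun n x y hx => by
  simp only [GLA.gradedComm, LinearMap.sub_apply, LinearMap.smul_apply, LinearMap.comp_apply,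
    hg n x y hx, hf n x y hx, map_add, map_smul, hf _ _ y (hg' n hx), hf n x _ hx,
    hg _ _ y (hf' n hx), hg n x _ hx, map_sub, smul_add, smul_sub, smul_smul]
  match_scalars <;>
    by_cases hk : Even k <;> by_cases hl : Even l <;> by_cases hn : Even n <;>
      simp [neg_one_zpow_eq_ite, Int.even_add, Int.even_mul, hk, hl, hn]

theorem IsDerivation.lieSub_le_comap {k : ℤ} {f : Lc →ₗ[ℚ] Lc} {p : ℤ → Submodule ℚ Lc}
    (hf : G.IsDerivation k f) (hpG : ∀ i, p i ≤ G.grade i)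
    (hpf : ∀ i, p i ≤ (G.lieSub p).comap f) :
    G.lieSub p ≤ (G.lieSub p).comap f := by
  refine le_inf_iff.mp (G.lieSub_le_of_homogeneous hpG (K := G.lieSub p ⊓ (G.lieSub p).comap f)
    (fun i => le_inf (fun x hx => G.mem_lieSub hx) (hpf i)) ?_) |>.2
  rintro b - x y hx ⟨hxL, hfx⟩ - ⟨hyL, hfy⟩
  refine ⟨G.br_mem_lieSub hxL hyL, ?_⟩
  change f (G.br x y) ∈ G.lieSub p
  rw [hf b x y hx]
  exact add_mem (G.br_mem_lieSub hfx hyL) (Submodule.smul_mem _ _ (G.br_mem_lieSub hxL hfy))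

theorem IsDerivation.lieSub_le_eqLocus {k : ℤ} {f g : Lc →ₗ[ℚ] Lc} {p : ℤ → Submodule ℚ Lc}
    (hf : G.IsDerivation k f) (hg : G.IsDerivation k g) (hpG : ∀ i, p i ≤ G.grade i)
    (hpfg : ∀ i, p i ≤ LinearMap.eqLocus f g) :
    G.lieSub p ≤ LinearMap.eqLocus f g := by
  refine G.lieSub_le_of_homogeneous hpG hpfg ?_
  rintro b - x y hx hfx - hfy
  rw [LinearMap.mem_eqLocus] at hfx hfy ⊢
  rw [hf b x y hx, hg b x y hx, hfx, hfy]

variable (G)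

-- `s` stands for `s(v ⊗ w)`; `hDs` is its differential for `v ∈ V₁`, and for `v ∈ V₀` too,
-- where `D v = 0`.
theorem gradedComm_apply_eq_neg_br {σ D : Lc →ₗ[ℚ] Lc} {i j : ℤ} {v w s : Lc}
    (hv : v ∈ G.grade i) (hw : w ∈ G.grade j) (hσv : σ v = (-1 : ℚ) ^ (i * j) • s)
    (hDs : D s = G.br v w - (-1 : ℚ) ^ ((i + 1) * j) • σ (D v)) :
    gradedComm (-1) (j + 1) D σ v = -G.br w v := by
  simp only [gradedComm, LinearMap.sub_apply, LinearMap.smul_apply, LinearMap.comp_apply, hσv,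
    map_smul, hDs, G.antisymm hv hw, smul_sub, smul_neg, smul_smul]
  match_scalars <;>
    by_cases hi : Even i <;> by_cases hj : Even j <;>
      simp [neg_one_zpow_eq_ite, Int.even_add, Int.even_mul, ← Int.not_even_iff_odd, hi, hj]

theorem gradedComm_apply_eq_br_sub {D τ σ σ' : Lc →ₗ[ℚ] Lc} {a j : ℤ} {S w : Lc}
    (hS : S ∈ G.grade a) (hw : w ∈ G.grade j) (hDw : D w = 0)
    (hσw : σ w = (-1 : ℚ) ^ (j * a) • τ S) (hσ'w : σ' w = (-1 : ℚ) ^ (j * (a - 1)) • τ (D S))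
    (hτS : gradedComm (-1) (j + 1) D τ S = -G.br w S) :
    gradedComm (-1) (a + 1) D σ w = G.br S w - σ' w := by
  have hDτS : D (τ S) = -G.br w S + (-1 : ℚ) ^ ((-1) * (j + 1)) • τ (D S) := by
    rw [← hτS, gradedComm]
    simp
  simp only [gradedComm, LinearMap.sub_apply, LinearMap.smul_apply, LinearMap.comp_apply, hσw,
    hσ'w, hDw, map_zero, smul_zero, sub_zero, map_smul, hDτS, G.antisymm hS hw, smul_add,
    smul_neg, smul_smul]
  match_scalars <;>
    by_cases ha : Even a <;> by_cases hj : Even j <;>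
      simp [neg_one_zpow_eq_ite, Int.even_add, Int.even_mul, ← Int.not_even_iff_odd, ha, hj]

end GLA

theorem statement4_general
    {Lc : Type u} [AddCommGroup Lc] [Module ℚ Lc] (G : GLA Lc)
    (V0 V1 W0 W1 : ℤ → Submodule ℚ Lc)
    (hV0 : ∀ i, V0 i ≤ G.grade i) (hV1 : ∀ i, V1 i ≤ G.grade i)
    (hW0 : ∀ i, W0 i ≤ G.grade i)
    -- the suspension `s(v ⊗ w)`, bilinear, of degree `|v|+|w|+1`; in `L₁` only
    -- `s(V₀⊗W₀) ⊕ s(V₁⊗W₀) ⊕ s(V₀⊗W₁)` is present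
    (sus : Lc →ₗ[ℚ] Lc →ₗ[ℚ] Lc)
    -- the derivations `σ_A` for homogeneous `A ∈ 𝕃(V ⊕ W)`
    (sg : ℤ → Lc → (Lc →ₗ[ℚ] Lc))
    (hsg_grade : ∀ {a : ℤ} {A : Lc}, A ∈ G.lieSub (fun i => V0 i ⊔ V1 i ⊔ W0 i ⊔ W1 i) →
      A ∈ G.grade a → ∀ {n : ℤ} {x : Lc}, x ∈ G.grade n → sg a A x ∈ G.grade (n + a + 1))
    (hsg_der : ∀ {a : ℤ} {A : Lc}, A ∈ G.lieSub (fun i => V0 i ⊔ V1 i ⊔ W0 i ⊔ W1 i) →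
      A ∈ G.grade a → ∀ {n : ℤ} (x y : Lc), x ∈ G.grade n →
      sg a A (G.br x y) = G.br (sg a A x) y + (-1 : ℚ) ^ ((a + 1) * n) • G.br x (sg a A y))
    (hsg_wv : ∀ {i j : ℤ} {v w : Lc}, v ∈ V0 i ⊔ V1 i → w ∈ W0 j →
      sg j w v = (-1 : ℚ) ^ (i * j) • sus v w)
    (hsg_Aw : ∀ {a : ℤ} {A : Lc}, A ∈ G.lieSub (fun i => V0 i ⊔ V1 i ⊔ W0 i ⊔ W1 i) →
      A ∈ G.grade a → ∀ {j : ℤ} {w : Lc}, w ∈ W0 j ⊔ W1 j →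
      sg a A w = (-1 : ℚ) ^ (j * a) • sg j w A)
    -- the degree `-1` derivation `D` of `L₁`
    (D : Lc →ₗ[ℚ] Lc)
    (hD_grade : ∀ {i : ℤ} {x : Lc}, x ∈ G.grade i → D x ∈ G.grade (i - 1))
    (hD_der : ∀ {i : ℤ} (x y : Lc), x ∈ G.grade i →
      D (G.br x y) = G.br (D x) y + (-1 : ℚ) ^ ((-1 : ℤ) * i) • G.br x (D y))
    -- `D = ∂_V` on `V`, `D = ∂_W` on `W`, with `∂(V₀) = ∂(W₀) = 0`,
    -- `∂(V₁) ⊆ 𝕃(V₀)` and `∂(W₁) ⊆ 𝕃(W₀)`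
    (hD_V0 : ∀ {i : ℤ} {v : Lc}, v ∈ V0 i → D v = 0)
    (hD_W0 : ∀ {j : ℤ} {w : Lc}, w ∈ W0 j → D w = 0)
    (hD_V1 : ∀ {i : ℤ} {v : Lc}, v ∈ V1 i → D v ∈ G.lieSub V0)
    -- the value of `D` on the suspension generators
    (hD_sus00 : ∀ {i j : ℤ} {v w : Lc}, v ∈ V0 i → w ∈ W0 j → D (sus v w) = G.br v w)
    (hD_sus10 : ∀ {i j : ℤ} {v w : Lc}, v ∈ V1 i → w ∈ W0 j →
      D (sus v w) = G.br v w - (-1 : ℚ) ^ ((i + 1) * j) • sg j w (D v))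
 :
    ∀ {a : ℤ} {S : Lc}, S ∈ G.lieSub (fun i => V0 i ⊔ V1 i) → S ∈ G.grade a →
    ∀ {T : Lc}, T ∈ G.lieSub W0 →
      (D (sg a S T) - (-1 : ℚ) ^ (a + 1) • sg a S (D T)
          = G.br S T - sg (a - 1) (D S) T) ∧
      (D (sg a S T) = G.br S T - sg (a - 1) (D S) T) := by
  intro a S hS hSa T hT
  have hD : G.IsDerivation (-1) D := fun _ => hD_der
  have hVG : ∀ i, V0 i ⊔ V1 i ≤ G.grade i := fun i => sup_le (hV0 i) (hV1 i)
  have hVL : G.lieSub (fun i => V0 i ⊔ V1 i) ≤ G.lieSub (fun i => V0 i ⊔ V1 i ⊔ W0 i ⊔ W1 i) :=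
    G.lieSub_mono fun i => le_sup_left.trans le_sup_left
  have hWL : ∀ {j w}, w ∈ W0 j → w ∈ G.lieSub (fun i => V0 i ⊔ V1 i ⊔ W0 i ⊔ W1 i) :=
    fun hw => G.mem_lieSub (Submodule.mem_sup_left (Submodule.mem_sup_right hw))
  have hcomm : ∀ {b B}, B ∈ G.lieSub (fun i => V0 i ⊔ V1 i ⊔ W0 i ⊔ W1 i) → B ∈ G.grade b →
      G.IsDerivation b (GLA.gradedComm (-1) (b + 1) D (sg b B)) := fun hB hb => by
    simpa using hD.gradedComm (fun _ => hsg_der hB hb) (fun _ _ hx => hD_grade hx)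
      (fun _ _ hx => by simpa only [add_assoc] using hsg_grade hB hb hx)
  have hDS : D S ∈ G.lieSub (fun i => V0 i ⊔ V1 i) := by
    refine hD.lieSub_le_comap hVG (fun i => sup_le (fun v hv => ?_) (fun v hv => ?_)) hS
    · simp [hD_V0 hv]
    · exact G.lieSub_mono (fun i => le_sup_left) (hD_V1 hv)
  have hσV : ∀ {j w}, w ∈ W0 j → ∀ i,
      V0 i ⊔ V1 i ≤ LinearMap.eqLocus (GLA.gradedComm (-1) (j + 1) D (sg j w)) (-G.br w) := by
    intro j w hw i
    refine sup_le (fun v hv => ?_) (fun v hv => ?_)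
    · exact G.gradedComm_apply_eq_neg_br (hV0 i hv) (hW0 j hw)
        (hsg_wv (Submodule.mem_sup_left hv) hw) (by simp [hD_V0 hv, hD_sus00 hv hw])
    · exact G.gradedComm_apply_eq_neg_br (hV1 i hv) (hW0 j hw)
        (hsg_wv (Submodule.mem_sup_right hv) hw) (hD_sus10 hv hw)
  have hσS : ∀ {j w}, w ∈ W0 j → GLA.gradedComm (-1) (j + 1) D (sg j w) S = -G.br w S :=
    fun {j _} hw => (hcomm (hWL hw) (hW0 j hw)).lieSub_le_eqLocus
      (G.isDerivation_br (hW0 j hw)).neg hVG (hσV hw) hS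
  have hDT : D T = 0 :=
    hD.lieSub_le_eqLocus (G.isDerivation_zero (-1)) hW0 (fun _ _ hw => by simp [hD_W0 hw]) hT
  have hσT : GLA.gradedComm (-1) (a + 1) D (sg a S) T = (G.br S - sg (a - 1) (D S)) T :=
    (hcomm (hVL hS) hSa).lieSub_le_eqLocus ((G.isDerivation_br hSa).sub
      (fun _ => by simpa using hsg_der (hVL hDS) (hD_grade hSa))) hW0
      (fun j _ hw => G.gradedComm_apply_eq_br_sub hSa (hW0 j hw) (hD_W0 hw)
        (hsg_Aw (hVL hS) hSa (Submodule.mem_sup_left hw))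
        (hsg_Aw (hVL hDS) (hD_grade hSa) (Submodule.mem_sup_left hw)) (hσS hw)) hT
  simp only [GLA.gradedComm, LinearMap.sub_apply, LinearMap.smul_apply, LinearMap.comp_apply,
    hDT, map_zero, smul_zero, sub_zero] at hσT ⊢
  exact ⟨hσT, hσT⟩

/-- Lemma 3.4(i) and Remark 3.5(iii).  In the dgl `(L₁, D)` built from
minimal Quillen models of 2-cones, for every homogeneous `S ∈ 𝕃(V)` the derivations
`[D, σ_S]` and `ad_S - σ_{∂_V S}` agree on `𝕃(W₀)`:
`[D, σ_S](T) = [S, T] - σ_{∂_V S}(T)`; equivalently `D(σ_S(T)) = [S, T] - σ_{∂_V S}(T)`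
for all `T ∈ 𝕃(W₀)`. -/
theorem statement4
    {Lc : Type u} [AddCommGroup Lc] [Module ℚ Lc] (G : GLA Lc)
    (V0 V1 W0 W1 Sp : ℤ → Submodule ℚ Lc)
    -- the ambient free Lie algebra is reduced
    (hred : G.Reduced)
    (hV0 : ∀ i, V0 i ≤ G.grade i) (hV1 : ∀ i, V1 i ≤ G.grade i)
    (hW0 : ∀ i, W0 i ≤ G.grade i) (hW1 : ∀ i, W1 i ≤ G.grade i)
    (hSp : ∀ i, Sp i ≤ G.grade i)
    -- the suspension `s(v ⊗ w)`, bilinear, of degree `|v|+|w|+1`; in `L₁` only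
    -- `s(V₀⊗W₀) ⊕ s(V₁⊗W₀) ⊕ s(V₀⊗W₁)` is present
    (sus : Lc →ₗ[ℚ] Lc →ₗ[ℚ] Lc)
    (hsus00 : ∀ {i j : ℤ} {v w : Lc}, v ∈ V0 i → w ∈ W0 j → sus v w ∈ Sp (i + j + 1))
    (hsus10 : ∀ {i j : ℤ} {v w : Lc}, v ∈ V1 i → w ∈ W0 j → sus v w ∈ Sp (i + j + 1))
    (hsus01 : ∀ {i j : ℤ} {v w : Lc}, v ∈ V0 i → w ∈ W1 j → sus v w ∈ Sp (i + j + 1))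
    -- `L₁` is generated by `V ⊕ W ⊕ s(V₀⊗W₀) ⊕ s(V₁⊗W₀) ⊕ s(V₀⊗W₁)`
    (hgen : G.lieSub (fun i => V0 i ⊔ V1 i ⊔ W0 i ⊔ W1 i ⊔ Sp i) = ⊤)
    -- the derivations `σ_A` for homogeneous `A ∈ 𝕃(V ⊕ W)`
    (sg : ℤ → Lc → (Lc →ₗ[ℚ] Lc))
    (hsg_grade : ∀ {a : ℤ} {A : Lc}, A ∈ G.lieSub (fun i => V0 i ⊔ V1 i ⊔ W0 i ⊔ W1 i) →
      A ∈ G.grade a → ∀ {n : ℤ} {x : Lc}, x ∈ G.grade n → sg a A x ∈ G.grade (n + a + 1))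
    (hsg_der : ∀ {a : ℤ} {A : Lc}, A ∈ G.lieSub (fun i => V0 i ⊔ V1 i ⊔ W0 i ⊔ W1 i) →
      A ∈ G.grade a → ∀ {n : ℤ} (x y : Lc), x ∈ G.grade n →
      sg a A (G.br x y) = G.br (sg a A x) y + (-1 : ℚ) ^ ((a + 1) * n) • G.br x (sg a A y))
    (hsg_vw : ∀ {i j : ℤ} {v w : Lc}, v ∈ V0 i ⊔ V1 i → w ∈ W0 j → sg i v w = sus v w)
    (hsg_vw' : ∀ {i j : ℤ} {v w : Lc}, v ∈ V0 i → w ∈ W1 j → sg i v w = sus v w)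
    (hsg_wv : ∀ {i j : ℤ} {v w : Lc}, v ∈ V0 i ⊔ V1 i → w ∈ W0 j →
      sg j w v = (-1 : ℚ) ^ (i * j) • sus v w)
    (hsg_wv' : ∀ {i j : ℤ} {v w : Lc}, v ∈ V0 i → w ∈ W1 j →
      sg j w v = (-1 : ℚ) ^ (i * j) • sus v w)
    (hsg_vv : ∀ {i i' : ℤ} {v v' : Lc}, v ∈ V0 i ⊔ V1 i → v' ∈ V0 i' ⊔ V1 i' →
      sg i v v' = 0)
    (hsg_ww : ∀ {j j' : ℤ} {w w' : Lc}, w ∈ W0 j ⊔ W1 j → w' ∈ W0 j' ⊔ W1 j' →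
      sg j w w' = 0)
    (hsg_vS : ∀ {i k : ℤ} {v x : Lc}, v ∈ V0 i ⊔ V1 i → x ∈ Sp k → sg i v x = 0)
    (hsg_wS : ∀ {j k : ℤ} {w x : Lc}, w ∈ W0 j ⊔ W1 j → x ∈ Sp k → sg j w x = 0)
    (hsg_Av : ∀ {a : ℤ} {A : Lc}, A ∈ G.lieSub (fun i => V0 i ⊔ V1 i ⊔ W0 i ⊔ W1 i) →
      A ∈ G.grade a → ∀ {i : ℤ} {v : Lc}, v ∈ V0 i ⊔ V1 i →
      sg a A v = (-1 : ℚ) ^ (i * a) • sg i v A)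
    (hsg_Aw : ∀ {a : ℤ} {A : Lc}, A ∈ G.lieSub (fun i => V0 i ⊔ V1 i ⊔ W0 i ⊔ W1 i) →
      A ∈ G.grade a → ∀ {j : ℤ} {w : Lc}, w ∈ W0 j ⊔ W1 j →
      sg a A w = (-1 : ℚ) ^ (j * a) • sg j w A)
    (hsg_AS : ∀ {a : ℤ} {A : Lc}, A ∈ G.lieSub (fun i => V0 i ⊔ V1 i ⊔ W0 i ⊔ W1 i) →
      A ∈ G.grade a → ∀ {k : ℤ} {x : Lc}, x ∈ Sp k → sg a A x = 0)
    -- the degree `-1` derivation `D` of `L₁`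
    (D : Lc →ₗ[ℚ] Lc)
    (hD_grade : ∀ {i : ℤ} {x : Lc}, x ∈ G.grade i → D x ∈ G.grade (i - 1))
    (hD_der : ∀ {i : ℤ} (x y : Lc), x ∈ G.grade i →
      D (G.br x y) = G.br (D x) y + (-1 : ℚ) ^ ((-1 : ℤ) * i) • G.br x (D y))
    -- `D = ∂_V` on `V`, `D = ∂_W` on `W`, with `∂(V₀) = ∂(W₀) = 0`,
    -- `∂(V₁) ⊆ 𝕃(V₀)` and `∂(W₁) ⊆ 𝕃(W₀)`
    (hD_V0 : ∀ {i : ℤ} {v : Lc}, v ∈ V0 i → D v = 0)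
    (hD_W0 : ∀ {j : ℤ} {w : Lc}, w ∈ W0 j → D w = 0)
    (hD_V1 : ∀ {i : ℤ} {v : Lc}, v ∈ V1 i → D v ∈ G.lieSub V0)
    (hD_W1 : ∀ {j : ℤ} {w : Lc}, w ∈ W1 j → D w ∈ G.lieSub W0)
    -- minimality of the two Quillen models
    (hD_V1dec : ∀ {i : ℤ} {v : Lc}, v ∈ V1 i → D v ∈ G.dec)
    (hD_W1dec : ∀ {j : ℤ} {w : Lc}, w ∈ W1 j → D w ∈ G.dec)
    -- the value of `D` on the suspension generators
    (hD_sus00 : ∀ {i j : ℤ} {v w : Lc}, v ∈ V0 i → w ∈ W0 j → D (sus v w) = G.br v w)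
    (hD_sus10 : ∀ {i j : ℤ} {v w : Lc}, v ∈ V1 i → w ∈ W0 j →
      D (sus v w) = G.br v w - (-1 : ℚ) ^ ((i + 1) * j) • sg j w (D v))
    (hD_sus01 : ∀ {i j : ℤ} {v w : Lc}, v ∈ V0 i → w ∈ W1 j →
      D (sus v w) = G.br v w - (-1 : ℚ) ^ i • sg i v (D w))
    -- `(L₁, D)` is a dgl
    (hDD : ∀ x : Lc, D (D x) = 0)
 :
    ∀ {a : ℤ} {S : Lc}, S ∈ G.lieSub (fun i => V0 i ⊔ V1 i) → S ∈ G.grade a →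
    ∀ {T : Lc}, T ∈ G.lieSub W0 →
      (D (sg a S T) - (-1 : ℚ) ^ (a + 1) • sg a S (D T)
          = G.br S T - sg (a - 1) (D S) T) ∧
      (D (sg a S T) = G.br S T - sg (a - 1) (D S) T) :=
  statement4_general G V0 V1 W0 W1 hV0 hV1 hW0 sus sg hsg_grade hsg_der hsg_wv hsg_Aw D hD_grade
    hD_der hD_V0 hD_W0 hD_V1 hD_sus00 hD_sus10
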